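/- Let H be a finite graph with no involutions and let x and y be vertices of H lying in different orbits of Aut(H). Then there exists a rooted graph (Γ,γ) such that the number of homomorphisms from Γ to H sending γ to x is not congruent modulo 2 to the number of homomorphisms from Γ to H sending γ to y. -/

import Mathlib

structure SymGraph (V : Type) where
  Adj : V → V → Prop
  symm : ∀ u v, Adj u v → Adj v u

def SymGraph.IsHom {V W : Type} (G : SymGraph V) (H : SymGraph W) (f : V → W) : Prop :=
  ∀ u v, G.Adj u v → H.Adj (f u) (f v)

noncomputable def homCount {V W : Type} (G : SymGraph V) (H : SymGraph W) : ℕ :=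
  Nat.card {f : V → W // G.IsHom H f}

def SymGraph.IsAut {V : Type} (H : SymGraph V) (σ : Equiv.Perm V) : Prop :=
  ∀ u v, H.Adj u v ↔ H.Adj (σ u) (σ v)

def SymGraph.fixedSubgraph {V : Type} (H : SymGraph V) (σ : Equiv.Perm V) :
    SymGraph {v : V // σ v = v} :=
  ⟨fun u v => H.Adj u v, fun u v h => H.symm u v h⟩
/-- Number of homomorphisms from Γ to H sending γ to x. -/
noncomputable def homCountR {V W : Type} (G : SymGraph V) (g : V) (H : SymGraph W) (h : W) : ℕ :=
  Nat.card {f : V → W // G.IsHom H f ∧ f g = h}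

/-!
Sorting homomorphisms `Γ → H` by their kernel partition writes `hom((Γ,γ),(H,x))` as the sum,
over partitions `s` of the vertices of `Γ`, of the number of injective rooted homomorphisms
`Γ/s → H`. Every nontrivial quotient is smaller than `Γ`, so by induction on the size of `Γ`,
if all rooted homomorphism counts into `(H,x)` and `(H,y)` agree mod 2, so do all injective
counts. Take `(Γ,γ) = (H,x)`: injective endomorphisms of a finite graph are automorphisms, so
the count into `(H,y)` is 0, while the count into `(H,x)` is the order of the stabiliser of `x`
in `Aut(H)`, which divides `|Aut(H)|`; with no involutions, Cauchy's theorem makes that odd.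
-/

open Function

namespace SymGraph

variable {U V : Type}

def quotient (Γ : SymGraph U) (s : Setoid U) : SymGraph (Quotient s) :=
  ⟨fun a b => ∃ u v, ⟦u⟧ = a ∧ ⟦v⟧ = b ∧ Γ.Adj u v,
    fun _ _ ⟨u, v, hu, hv, h⟩ => ⟨v, u, hv, hu, Γ.symm u v h⟩⟩

theorem isHom_quotient_iff {Γ : SymGraph U} {s : Setoid U} {H : SymGraph V}
    {g : Quotient s → V} : (Γ.quotient s).IsHom H g ↔ Γ.IsHom H (g ∘ Quotient.mk s) := by
  refine ⟨fun hg u v h => hg _ _ ⟨u, v, rfl, rfl, h⟩, ?_⟩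
  rintro hg _ _ ⟨u, v, rfl, rfl, h⟩
  exact hg u v h

end SymGraph

open SymGraph

noncomputable def injCountR {U V : Type} (Γ : SymGraph U) (γ : U) (H : SymGraph V) (x : V) : ℕ :=
  Nat.card {f : U → V // Γ.IsHom H f ∧ Injective f ∧ f γ = x}

instance Setoid.instFinite {U : Type} [Finite U] : Finite (Setoid U) :=
  Finite.of_injective _ fun _ _ h => Setoid.eq_iff_rel_eq.2 h

noncomputable instance Setoid.instFintype {U : Type} [Finite U] : Fintype (Setoid U) :=
  Fintype.ofFinite _

section Decomposition

variable {U V : Type} (Γ : SymGraph U) (γ : U) (H : SymGraph V) (x : V)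

def homKerEquiv (s : Setoid U) :
    {f : U → V // (Γ.IsHom H f ∧ f γ = x) ∧ Setoid.ker f = s} ≃
      {g : Quotient s → V // (Γ.quotient s).IsHom H g ∧ Injective g ∧ g ⟦γ⟧ = x} where
  toFun f := ⟨Quotient.lift f.1 f.2.2.ge, isHom_quotient_iff.2 f.2.1.1,
    (Setoid.lift_injective_iff_ker_eq_of_le _).2 f.2.2, f.2.1.2⟩
  invFun g := ⟨g.1 ∘ Quotient.mk s, ⟨isHom_quotient_iff.1 g.2.1, g.2.2.2⟩,
    Setoid.ext fun _ _ => g.2.2.1.eq_iff.trans Quotient.eq⟩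
  left_inv _ := rfl
  right_inv _ := Subtype.ext <| funext fun a => Quotient.inductionOn a fun _ => rfl

open Classical in
theorem homCountR_eq_injCountR_add_sum [Finite U] [Finite V] :
    homCountR Γ γ H x = injCountR Γ γ H x +
      ∑ s ∈ Finset.univ.erase ⊥, injCountR (Γ.quotient s) ⟦γ⟧ H x := by
  have hfib : homCountR Γ γ H x =
      ∑ s : Setoid U, Nat.card {f : U → V // (Γ.IsHom H f ∧ f γ = x) ∧ Setoid.ker f = s} := by
    rw [homCountR, ← Nat.card_sigma]
    exact Nat.card_congr ((Equiv.sigmaFiberEquiv fun f => Setoid.ker f.1).symm.trans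
      (Equiv.sigmaCongrRight fun s => Equiv.subtypeSubtypeEquivSubtypeInter
        (fun f => Γ.IsHom H f ∧ f γ = x) (fun f => Setoid.ker f = s)))
  have hbot : Nat.card {f : U → V // (Γ.IsHom H f ∧ f γ = x) ∧ Setoid.ker f = ⊥} =
      injCountR Γ γ H x :=
    Nat.card_congr <| Equiv.subtypeEquivRight fun f => by
      rw [← Setoid.injective_iff_ker_bot]; tauto
  rw [hfib, ← Finset.add_sum_erase _ _ (Finset.mem_univ ⊥), hbot]
  exact congrArg _ (Finset.sum_congr rfl fun s _ => Nat.card_congr (homKerEquiv Γ γ H x s))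

end Decomposition

theorem Setoid.card_quotient_lt {U : Type} [Finite U] {s : Setoid U} (hs : s ≠ ⊥) :
    Nat.card (Quotient s) < Nat.card U := by
  have := Fintype.ofFinite U
  have := Fintype.ofFinite (Quotient s)
  simp only [Nat.card_eq_fintype_card]
  refine Fintype.card_lt_of_surjective_not_injective _ Quotient.mk_surjective fun hinj => hs ?_
  rw [← Setoid.ker_mk_eq s]
  exact (Setoid.injective_iff_ker_bot _).1 hinj

open Classical in
/-- Möbius inversion over the partition lattice, carried out modulo `n`. -/
theorem injCountR_modEq_of_homCountR_modEq {V W : Type} [Finite V] [Finite W]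
    {H : SymGraph V} {H' : SymGraph W} {x : V} {y : W} {n : ℕ}
    (hhom : ∀ (U : Type) (_ : Fintype U) (Γ : SymGraph U) (γ : U),
      homCountR Γ γ H x ≡ homCountR Γ γ H' y [MOD n])
    {U : Type} [Finite U] (Γ : SymGraph U) (γ : U) :
    injCountR Γ γ H x ≡ injCountR Γ γ H' y [MOD n] := by
  induction h : Nat.card U using Nat.strong_induction_on generalizing U with
  | _ m ih =>
    have hquot : ∀ s ∈ Finset.univ.erase (⊥ : Setoid U),
        injCountR (Γ.quotient s) ⟦γ⟧ H x ≡ injCountR (Γ.quotient s) ⟦γ⟧ H' y [MOD n] :=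
      fun s hs => ih _ (h ▸ Setoid.card_quotient_lt (Finset.ne_of_mem_erase hs)) _ _ rfl
    have hΓ := hhom U (Fintype.ofFinite U) Γ γ
    rw [homCountR_eq_injCountR_add_sum, homCountR_eq_injCountR_add_sum] at hΓ
    exact (Nat.ModEq.sum hquot).add_right_cancel hΓ

namespace SymGraph

variable {V : Type} [Finite V] (H : SymGraph V)

/-- An injective endomorphism of a finite graph permutes its finitely many edges, so it also
reflects adjacency. -/
theorem adj_of_adj_map {f : V → V} (hf : H.IsHom H f) (hinj : Injective f) {u v : V}
    (h : H.Adj (f u) (f v)) : H.Adj u v := by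
  let E : Set (V × V) := {p | H.Adj p.1 p.2}
  have hmaps : Set.MapsTo (Prod.map f f) E E := fun p hp => hf p.1 p.2 hp
  have hbij := (Set.toFinite E).injOn_iff_bijOn_of_mapsTo hmaps |>.1
    (hinj.prodMap hinj).injOn
  obtain ⟨p, hp, hpuv⟩ := hbij.surjOn (show (f u, f v) ∈ E from h)
  obtain rfl : p = (u, v) := (hinj.prodMap hinj) hpuv
  exact hp

theorem isAut_ofBijective {f : V → V} (hf : H.IsHom H f) (hbij : Bijective f) :
    H.IsAut (Equiv.ofBijective f hbij) :=
  fun _ _ => ⟨hf _ _, H.adj_of_adj_map hf hbij.1⟩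

theorem injCountR_eq_card_aut (x y : V) :
    injCountR H x H y = Nat.card {σ : Equiv.Perm V // H.IsAut σ ∧ σ x = y} :=
  Nat.card_congr
    { toFun f := ⟨Equiv.ofBijective f.1 (Finite.injective_iff_bijective.1 f.2.2.1),
        H.isAut_ofBijective f.2.1 _, f.2.2.2⟩
      invFun σ := ⟨σ.1, fun u v => (σ.2.1 u v).1, σ.1.injective, σ.2.2⟩
      left_inv _ := rfl
      right_inv _ := Subtype.ext <| Equiv.ext fun _ => rfl }

def autGroup : Subgroup (Equiv.Perm V) where
  carrier := {σ | H.IsAut σ}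
  one_mem' _ _ := Iff.rfl
  mul_mem' hσ hτ u v := (hτ u v).trans (hσ _ _)
  inv_mem' {σ} hσ u v := by simpa using (hσ (σ⁻¹ u) (σ⁻¹ v)).symm

theorem odd_card_autGroup (hinv : ¬∃ σ : Equiv.Perm V, H.IsAut σ ∧ orderOf σ = 2) :
    Odd (Nat.card H.autGroup) := by
  refine Nat.odd_iff.2 (Nat.two_dvd_ne_zero.1 fun h2 => hinv ?_)
  have : Fact (Nat.Prime 2) := ⟨Nat.prime_two⟩
  obtain ⟨σ, hσ⟩ := exists_prime_orderOf_dvd_card' 2 h2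
  exact ⟨σ, σ.2, (Subgroup.orderOf_coe σ).trans hσ⟩

theorem odd_injCountR_self (hinv : ¬∃ σ : Equiv.Perm V, H.IsAut σ ∧ orderOf σ = 2) (x : V) :
    Odd (injCountR H x H x) := by
  let stab := H.autGroup ⊓ MulAction.stabilizer (Equiv.Perm V) x
  have hcard : injCountR H x H x = Nat.card stab := H.injCountR_eq_card_aut x x
  rw [hcard]
  exact (H.odd_card_autGroup hinv).of_dvd_nat (Subgroup.card_dvd_of_le inf_le_left)

theorem injCountR_eq_zero {x y : V} (horb : ¬∃ σ : Equiv.Perm V, H.IsAut σ ∧ σ x = y) :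
    injCountR H x H y = 0 := by
  rw [injCountR_eq_card_aut, Nat.card_eq_zero]
  exact .inl ⟨fun σ => horb ⟨σ.1, σ.2⟩⟩

end SymGraph

/-- For an involution-free H and vertices x, y in different orbits of Aut(H),
some rooted graph (Γ,γ) distinguishes x and y modulo 2. -/
theorem stmt8 {V : Type} [Fintype V] (H : SymGraph V)
    (hinv : ¬∃ σ : Equiv.Perm V, H.IsAut σ ∧ orderOf σ = 2)
    (x y : V) (horb : ¬∃ σ : Equiv.Perm V, H.IsAut σ ∧ σ x = y) :
    ∃ (U : Type) (_ : Fintype U) (Γ : SymGraph U) (γ : U),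
      ¬(homCountR Γ γ H x ≡ homCountR Γ γ H y [MOD 2]) := by
  by_contra! hhom
  have hinj := injCountR_modEq_of_homCountR_modEq hhom H x
  rw [H.injCountR_eq_zero horb] at hinj
  exact Nat.not_even_iff_odd.2 (H.odd_injCountR_self hinv x)
    (even_iff_two_dvd.2 (Nat.modEq_zero_iff_dvd.1 hinj))
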